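/- Let V be a finite index set, for each u ∈ V let X_u ⊆ ℝ^{d_u} be a nonempty compact convex set, and for each ordered pair (u,v) with u ≠ v let A^{uv} be a d_u × d_v real matrix. Let X := ∏_u X_u and let R be the block matrix whose (u,v) block is −A^{uv} for u ≠ v and zero for u = v; assume xᵀR x = 0 for all x ∈ X (the network game is zero-sum in sequence form). For a step size η with 0 < η ≤ min{1/(8‖R‖²), 1} and initial points x^0, x̂^1 ∈ X, let each agent u run Optimistic Gradient Ascent: x_u^t := argmax_{x ∈ X_u} { η⟨x, Σ_{v ≠ u} A^{uv} x_v^{t−1}⟩ − (1/2)‖x − x̂_u^t‖² } and x̂_u^{t+1} := argmax_{x ∈ X_u} { η⟨x, Σ_{v ≠ u} A^{uv} x_v^t⟩ − (1/2)‖x − x̂_u^t‖² }. Then for every T ≥ 1, the time averages x̄_u := (1/T)Σ_{s=1}^T x_u^s satisfy, for every u ∈ V and every x ∈ X_u: x̄_uᵀ Σ_{v ≠ u} A^{uv} x̄_v ≥ xᵀ Σ_{v ≠ u} A^{uv} x̄_v − D²/(ηT), where D is the Euclidean diameter of X. -/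

import Mathlib

open Finset
open scoped RealInnerProductSpace

noncomputable section

/-- The bilinear form `xᵀ M y` for a rectangular matrix `M`. -/
def bilForm {m k : ℕ} (M : Matrix (Fin m) (Fin k) ℝ)
    (x : EuclideanSpace ℝ (Fin m)) (y : EuclideanSpace ℝ (Fin k)) : ℝ :=
  ∑ i, ∑ j, x i * M i j * y j

/-- The block matrix `R` whose `(u,v)` block is `−A^{uv}` for `u ≠ v` and zero
for `u = v`. -/
def blockR {V : Type} [Fintype V] [DecidableEq V] (d : V → ℕ)
    (A : ∀ u v, Matrix (Fin (d u)) (Fin (d v)) ℝ) :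
    Matrix ((u : V) × Fin (d u)) ((u : V) × Fin (d u)) ℝ :=
  fun p q => if p.1 = q.1 then 0 else -(A p.1 q.1 p.2 q.2)

/-- The ℓ2 operator norm of a matrix. -/
def l2OpNorm {ι : Type} [Fintype ι] [DecidableEq ι] (R : Matrix ι ι ℝ) : ℝ :=
  ‖Matrix.toEuclideanCLM (𝕜 := ℝ) R‖

/-- A profile of strategies, viewed as a single vector in the joint Euclidean
space `ℝ^{Σ_u d_u}`. -/
def embProf {V : Type} [Fintype V] (d : V → ℕ)
    (p : ∀ u, EuclideanSpace ℝ (Fin (d u))) :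
    EuclideanSpace ℝ ((u : V) × Fin (d u)) :=
  WithLp.toLp 2 (fun q : (u : V) × Fin (d u) => p q.1 q.2)

-- variational inequality from maximality over a convex set
lemma vi_lemma {F : Type*} [NormedAddCommGroup F] [InnerProductSpace ℝ F]
    {X : Set F} (hX : Convex ℝ X) {g c p : F} (hp : p ∈ X)
    (h : ∀ y ∈ X, ⟪g, y⟫ - (1/2) * ‖y - c‖ ^ 2 ≤ ⟪g, p⟫ - (1/2) * ‖p - c‖ ^ 2) :
    ∀ y ∈ X, ⟪g, y - p⟫ ≤ ⟪p - c, y - p⟫ := by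
  intro y hy
  set w := y - p with hw
  set q := ‖w‖ ^ 2 with hq
  set s := ⟪g, w⟫ - ⟪p - c, w⟫ with hs
  have key : ∀ lam : ℝ, 0 ≤ lam → lam ≤ 1 → lam * s ≤ lam ^ 2 * q / 2 := by
    intro lam h0 h1
    have hmem : p + lam • w ∈ X := by
      have := hX hp hy (a := 1 - lam) (b := lam) (by linarith) h0 (by ring)
      convert this using 1
      rw [hw]
      module
    have := h _ hmem
    have e1 : ⟪g, p + lam • w⟫ = ⟪g, p⟫ + lam * ⟪g, w⟫ := by
      rw [inner_add_right, real_inner_smul_right]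
    have e2 : ‖p + lam • w - c‖ ^ 2 = ‖p - c‖ ^ 2 + 2 * lam * ⟪p - c, w⟫ + lam ^ 2 * q := by
      have : p + lam • w - c = (p - c) + lam • w := by abel
      have hns : ‖lam • w‖ ^ 2 = lam ^ 2 * q := by
        rw [norm_smul, mul_pow, Real.norm_eq_abs, sq_abs, hq]
      rw [this, norm_add_sq_real, real_inner_smul_right, hns]
      ring
    rw [e1, e2] at this
    simp only [hs]
    nlinarith [this]
  have hs0 : s ≤ 0 := by
    by_contra hpos
    push_neg at hpos
    have hq0 : 0 ≤ q := by positivity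
    rcases eq_or_lt_of_le hq0 with hq' | hq'
    · have := key 1 zero_le_one le_rfl
      rw [← hq'] at this
      simp at this
      linarith
    · set lam := min 1 (s / q) with hlam
      have hl0 : 0 < lam := lt_min one_pos (div_pos hpos hq')
      have hl1 : lam ≤ 1 := min_le_left _ _
      have := key lam hl0.le hl1
      have hlq : lam * q ≤ s := by
        calc lam * q ≤ (s / q) * q := by
              apply mul_le_mul_of_nonneg_right (min_le_right _ _) hq0
        _ = s := by field_simp
      nlinarith
  have : ⟪g, w⟫ ≤ ⟪p - c, w⟫ := by linarith [hs0]
  simpa [hw] using this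

lemma inner_three {F : Type*} [NormedAddCommGroup F] [InnerProductSpace ℝ F]
    (a b m : F) : ⟪m - a, b - m⟫ = (‖b - a‖ ^ 2 - ‖b - m‖ ^ 2 - ‖m - a‖ ^ 2) / 2 := by
  have h := norm_add_sq_real (m - a) (b - m)
  have e : m - a + (b - m) = b - a := by abel
  rw [e] at h
  have : ⟪m - a, b - m⟫ = ⟪b - m, m - a⟫ := real_inner_comm _ _
  linarith [h]

lemma step2_lemma {F : Type*} [NormedAddCommGroup F] [InnerProductSpace ℝ F]
    {X : Set F} (hX : Convex ℝ X) {g g' c p pn z : F} (hz : z ∈ X)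
    (hp : p ∈ X) (hpn : pn ∈ X)
    (h1 : ∀ y ∈ X, ⟪g', y⟫ - (1/2) * ‖y - c‖ ^ 2 ≤ ⟪g', p⟫ - (1/2) * ‖p - c‖ ^ 2)
    (h2 : ∀ y ∈ X, ⟪g, y⟫ - (1/2) * ‖y - c‖ ^ 2 ≤ ⟪g, pn⟫ - (1/2) * ‖pn - c‖ ^ 2) :
    ⟪g, z - p⟫ ≤ (‖z - c‖ ^ 2 - ‖z - pn‖ ^ 2) / 2 + ⟪g - g', pn - p⟫
      - ‖pn - p‖ ^ 2 / 2 - ‖p - c‖ ^ 2 / 2 := by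
  have v2 := vi_lemma hX hpn h2 z hz
  have v1 := vi_lemma hX hp h1 pn hpn
  rw [inner_three c z pn] at v2
  rw [inner_three c pn p] at v1
  have d1 : ⟪g, z - p⟫ = ⟪g, z - pn⟫ + ⟪g, pn - p⟫ := by
    rw [← inner_add_right]; congr 1; abel
  have d2 : ⟪g, pn - p⟫ = ⟪g - g', pn - p⟫ + ⟪g', pn - p⟫ := by
    rw [← inner_add_left]; congr 1; abel
  linarith

section Joint
variable {V : Type} [Fintype V] [DecidableEq V] (d : V → ℕ)
  (A : ∀ u v, Matrix (Fin (d u)) (Fin (d v)) ℝ)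

/-- per-agent gradient vector -/
def gvec (p : ∀ u, EuclideanSpace ℝ (Fin (d u))) (w : V) :
    EuclideanSpace ℝ (Fin (d w)) :=
  WithLp.toLp 2 (fun i => ∑ v ∈ Finset.univ.erase w, ∑ j, A w v i j * p v j)

lemma inner_gvec (p : ∀ u, EuclideanSpace ℝ (Fin (d u))) (w : V)
    (y : EuclideanSpace ℝ (Fin (d w))) :
    ⟪y, gvec d A p w⟫ = ∑ v ∈ Finset.univ.erase w, bilForm (A w v) y (p v) := by
  simp only [PiLp.inner_apply, RCLike.inner_apply, gvec, bilForm, starRingEnd_apply, star_trivial,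
    PiLp.toLp_apply]
  rw [Finset.sum_comm]
  apply Finset.sum_congr rfl
  intro v _
  rw [mul_comm]
  simp [Finset.mul_sum, mul_assoc, mul_sub]

lemma inner_embProf (p q : ∀ u, EuclideanSpace ℝ (Fin (d u))) :
    ⟪embProf d p, embProf d q⟫ = ∑ w, ⟪p w, q w⟫ := by
  simp only [PiLp.inner_apply, RCLike.inner_apply, starRingEnd_apply, star_trivial, embProf,
    PiLp.toLp_apply]
  rw [← Finset.univ_sigma_univ, Finset.sum_sigma]

lemma normsq_embProf (p : ∀ u, EuclideanSpace ℝ (Fin (d u))) :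
    ‖embProf d p‖ ^ 2 = ∑ w, ‖p w‖ ^ 2 := by
  rw [← real_inner_self_eq_norm_sq, inner_embProf]
  exact Finset.sum_congr rfl fun w _ => real_inner_self_eq_norm_sq _

lemma embProf_sub (p q : ∀ u, EuclideanSpace ℝ (Fin (d u))) :
    embProf d (fun u => p u - q u) = embProf d p - embProf d q := by
  ext r; simp [embProf]

lemma embProf_gvec (p : ∀ u, EuclideanSpace ℝ (Fin (d u))) :
    embProf d (gvec d A p)
      = -(Matrix.toEuclideanCLM (𝕜 := ℝ) (blockR d A) (embProf d p)) := by
  ext q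
  simp only [embProf, Matrix.toEuclideanCLM_toLp, PiLp.toLp_apply, PiLp.neg_apply,
    Matrix.mulVec, dotProduct, blockR, gvec]
  rw [← Finset.univ_sigma_univ, Finset.sum_sigma]
  have key : ∑ v : V, ∑ j, (if q.1 = v then (0:ℝ) else -(A q.1 v q.2 j)) * p v j
      = ∑ v ∈ Finset.univ.erase q.1, ∑ j, -(A q.1 v q.2 j * p v j) := by
    rw [← Finset.sum_erase_add Finset.univ _ (Finset.mem_univ q.1)]
    simp only [if_true, zero_mul, Finset.sum_const_zero, add_zero]
    apply Finset.sum_congr rfl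
    intro v hv
    have hne : q.1 ≠ v := Ne.symm (Finset.mem_erase.mp hv).1
    simp [hne]
  rw [key]
  simp

lemma inner_gvec' (p : ∀ u, EuclideanSpace ℝ (Fin (d u))) (w : V)
    (y : EuclideanSpace ℝ (Fin (d w))) :
    ⟪gvec d A p w, y⟫ = ∑ v ∈ Finset.univ.erase w, bilForm (A w v) y (p v) := by
  rw [real_inner_comm]; exact inner_gvec d A p w y

lemma inner_smul_gvec (c : ℝ) (p : ∀ u, EuclideanSpace ℝ (Fin (d u))) (w : V)
    (y : EuclideanSpace ℝ (Fin (d w))) :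
    ⟪c • gvec d A p w, y⟫ = c * ∑ v ∈ Finset.univ.erase w, bilForm (A w v) y (p v) := by
  rw [real_inner_smul_left, inner_gvec']

lemma normsq_sub_embProf (p q : ∀ u, EuclideanSpace ℝ (Fin (d u))) :
    ∑ w, ‖p w - q w‖ ^ 2 = ‖embProf d p - embProf d q‖ ^ 2 := by
  rw [← embProf_sub, normsq_embProf]

end Joint

lemma bilForm_eq_inner {m k : ℕ} (M : Matrix (Fin m) (Fin k) ℝ)
    (q : EuclideanSpace ℝ (Fin m)) (z : EuclideanSpace ℝ (Fin k)) :
    bilForm M q z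
      = ⟪(WithLp.equiv 2 (Fin k → ℝ)).symm (fun j => ∑ i, q i * M i j), z⟫ := by
  simp only [bilForm, PiLp.inner_apply, RCLike.inner_apply, starRingEnd_apply, star_trivial]
  rw [Finset.sum_comm]
  apply Finset.sum_congr rfl
  intro j _
  rw [mul_comm]; simp [Finset.sum_mul]

lemma bilForm_smul_right {m k : ℕ} (M : Matrix (Fin m) (Fin k) ℝ)
    (q : EuclideanSpace ℝ (Fin m)) (c : ℝ) (z : EuclideanSpace ℝ (Fin k)) :
    bilForm M q (c • z) = c * bilForm M q z := by
  rw [bilForm_eq_inner, bilForm_eq_inner, real_inner_smul_right]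

lemma bilForm_sum_right {m k : ℕ} (M : Matrix (Fin m) (Fin k) ℝ)
    (q : EuclideanSpace ℝ (Fin m)) {α : Type*} (S : Finset α)
    (z : α → EuclideanSpace ℝ (Fin k)) :
    bilForm M q (∑ s ∈ S, z s) = ∑ s ∈ S, bilForm M q (z s) := by
  simp only [bilForm_eq_inner]
  exact inner_sum S z _

lemma clm_inner_le {ι : Type} [Fintype ι] [DecidableEq ι] (R : Matrix ι ι ℝ)
    (δ Pv : EuclideanSpace ℝ ι) :
    ⟪-(Matrix.toEuclideanCLM (𝕜 := ℝ) R δ), Pv⟫ ≤ l2OpNorm R * ‖δ‖ * ‖Pv‖ := by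
  calc ⟪-(Matrix.toEuclideanCLM (𝕜 := ℝ) R δ), Pv⟫
      ≤ ‖-(Matrix.toEuclideanCLM (𝕜 := ℝ) R δ)‖ * ‖Pv‖ := real_inner_le_norm _ _
    _ = ‖Matrix.toEuclideanCLM (𝕜 := ℝ) R δ‖ * ‖Pv‖ := by rw [norm_neg]
    _ ≤ (l2OpNorm R * ‖δ‖) * ‖Pv‖ := by
        apply mul_le_mul_of_nonneg_right _ (norm_nonneg _)
        exact ContinuousLinearMap.le_opNorm _ _

section Diam
variable {V : Type} [Fintype V] (d : V → ℕ)

lemma embProf_continuous : Continuous (embProf d) := by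
  let ψ : (∀ u, EuclideanSpace ℝ (Fin (d u))) →ₗ[ℝ] EuclideanSpace ℝ ((u : V) × Fin (d u)) :=
    { toFun := embProf d, map_add' := fun _ _ => by ext; simp [embProf],
      map_smul' := fun _ _ => by ext; simp [embProf] }
  exact ψ.continuous_of_finiteDimensional

lemma emb_dist_le (X : ∀ u, Set (EuclideanSpace ℝ (Fin (d u))))
    (hXcp : ∀ u, IsCompact (X u)) (p q : ∀ u, EuclideanSpace ℝ (Fin (d u)))
    (hp : ∀ u, p u ∈ X u) (hq : ∀ u, q u ∈ X u) :
    ‖embProf d p - embProf d q‖ ≤ Metric.diam (embProf d '' {r | ∀ u, r u ∈ X u}) := by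
  have hset : {r : ∀ u, EuclideanSpace ℝ (Fin (d u)) | ∀ u, r u ∈ X u}
      = Set.pi Set.univ X := by
    ext r; simp [Set.mem_pi]
  have hcp : IsCompact (embProf d '' {r | ∀ u, r u ∈ X u}) := by
    rw [hset]
    exact (isCompact_univ_pi hXcp).image (embProf_continuous d)
  rw [← dist_eq_norm]
  exact Metric.dist_le_diam_of_mem hcp.isBounded ⟨p, hp, rfl⟩ ⟨q, hq, rfl⟩

end Diam


set_option maxHeartbeats 2000000 in
/-- Theorem 1 of the paper in sequence/block form: when all agents of a
network zero-sum game run Optimistic Gradient Ascent, the time-average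
strategy profile is a `D²/(ηT)`-approximate Nash equilibrium. -/
theorem oga_time_average_nash {V : Type} [Fintype V] [DecidableEq V]
    (d : V → ℕ) (X : ∀ u, Set (EuclideanSpace ℝ (Fin (d u))))
    (hXne : ∀ u, (X u).Nonempty) (hXcp : ∀ u, IsCompact (X u))
    (hXconv : ∀ u, Convex ℝ (X u))
    (A : ∀ u v, Matrix (Fin (d u)) (Fin (d v)) ℝ)
    (hzero : ∀ p : ∀ u, EuclideanSpace ℝ (Fin (d u)), (∀ u, p u ∈ X u) →
      ∑ u, ∑ v ∈ Finset.univ.erase u, bilForm (A u v) (p u) (p v) = 0)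
    (η : ℝ) (hη : 0 < η)
    (hη' : η ≤ min (1 / (8 * l2OpNorm (blockR d A) ^ 2)) 1)
    (x xh : ℕ → ∀ u, EuclideanSpace ℝ (Fin (d u)))
    (hx0 : ∀ u, x 0 u ∈ X u) (hxh1 : ∀ u, xh 1 u ∈ X u)
    (hup1 : ∀ t : ℕ, 1 ≤ t → ∀ u, x t u ∈ X u ∧ ∀ y ∈ X u,
      η * (∑ v ∈ Finset.univ.erase u, bilForm (A u v) y (x (t - 1) v))
          - (1 / 2) * ‖y - xh t u‖ ^ 2
        ≤ η * (∑ v ∈ Finset.univ.erase u, bilForm (A u v) (x t u) (x (t - 1) v))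
          - (1 / 2) * ‖x t u - xh t u‖ ^ 2)
    (hup2 : ∀ t : ℕ, 1 ≤ t → ∀ u, xh (t + 1) u ∈ X u ∧ ∀ y ∈ X u,
      η * (∑ v ∈ Finset.univ.erase u, bilForm (A u v) y (x t v))
          - (1 / 2) * ‖y - xh t u‖ ^ 2
        ≤ η * (∑ v ∈ Finset.univ.erase u, bilForm (A u v) (xh (t + 1) u) (x t v))
          - (1 / 2) * ‖xh (t + 1) u - xh t u‖ ^ 2) :
    ∀ T : ℕ, 1 ≤ T → ∀ u : V, ∀ y ∈ X u,
      (∑ v ∈ Finset.univ.erase u, bilForm (A u v)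
          ((T : ℝ)⁻¹ • ∑ s ∈ Finset.Icc 1 T, x s u)
          ((T : ℝ)⁻¹ • ∑ s ∈ Finset.Icc 1 T, x s v))
        ≥ (∑ v ∈ Finset.univ.erase u, bilForm (A u v) y
            ((T : ℝ)⁻¹ • ∑ s ∈ Finset.Icc 1 T, x s v))
          - (Metric.diam (embProf d '' {p | ∀ u, p u ∈ X u})) ^ 2 / (η * T) := by
  intro T hT u y hy
  have hTpos : (0:ℝ) < T := by exact_mod_cast hT
  set D : ℝ := Metric.diam (embProf d '' {p | ∀ u, p u ∈ X u}) with hD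
  have hD0 : 0 ≤ D := Metric.diam_nonneg
  -- memberships
  have hxmem : ∀ t w, x t w ∈ X w := by
    intro t w
    cases t with
    | zero => exact hx0 w
    | succ n => exact (hup1 (n+1) (by omega) w).1
  have hxhmem : ∀ t, 1 ≤ t → ∀ w, xh t w ∈ X w := by
    intro t ht w
    rcases Nat.exists_eq_add_of_le ht with ⟨n, rfl⟩
    cases n with
    | zero => exact hxh1 w
    | succ m =>
      have he : 1 + (m+1) = (1 + m) + 1 := by omega
      rw [he]
      exact (hup2 (1+m) (by omega) w).1
  -- averages
  have hcard : (Finset.Icc 1 T).card = T := by rw [Nat.card_Icc]; omega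
  set xbar : ∀ w, EuclideanSpace ℝ (Fin (d w)) :=
    fun w => (T:ℝ)⁻¹ • ∑ s ∈ Finset.Icc 1 T, x s w with hxbar
  have hxbarmem : ∀ w, xbar w ∈ X w := by
    intro w
    have he : xbar w = ∑ s ∈ Finset.Icc 1 T, (T:ℝ)⁻¹ • x s w := Finset.smul_sum
    rw [he]
    refine (hXconv w).sum_mem (fun i _ => by positivity) ?_ (fun i _ => hxmem i w)
    rw [Finset.sum_const, hcard, nsmul_eq_mul]
    field_simp
  set z : ∀ w, EuclideanSpace ℝ (Fin (d w)) := Function.update xbar u y with hzdef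
  have hzu : z u = y := Function.update_self u y xbar
  have hzw : ∀ w, w ≠ u → z w = xbar w := fun w hw => Function.update_of_ne hw y xbar
  have hzmem : ∀ w, z w ∈ X w := by
    intro w
    by_cases hw : w = u
    · subst hw; rw [hzu]; exact hy
    · rw [hzw w hw]; exact hxbarmem w
  -- step size
  set N : ℝ := l2OpNorm (blockR d A) with hN
  have hN0 : 0 ≤ N := norm_nonneg _
  have hr2 : (η * N)^2 ≤ 1/8 := by
    rcases eq_or_lt_of_le hN0 with h0 | h0
    · rw [← h0]; norm_num
    · have h1 : η ≤ 1 / (8 * N ^ 2) := le_trans hη' (min_le_left _ _)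
      have h2 : η ≤ 1 := le_trans hη' (min_le_right _ _)
      have h3 : η * (8 * N^2) ≤ 1 := by
        rw [← le_div_iff₀ (by positivity)] ; exact h1
      nlinarith
  -- potential functions
  set f : ℕ → ℝ := fun t => ‖embProf d z - embProf d (xh t)‖^2 with hf
  set B : ℕ → ℝ := fun t => ‖embProf d (xh (t+1)) - embProf d (x t)‖^2 with hB
  -- per-step inequality
  have key : ∀ t, 1 ≤ t →
      ∑ w, η * ⟪gvec d A (x t) w, z w - x t w⟫
        ≤ (f t - f (t+1))/2 + (B (t-1) - B t)/4 := by
    intro t ht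
    have htm : (t-1) + 1 = t := Nat.succ_pred_eq_of_pos ht
    have perw : ∀ w : V, η * ⟪gvec d A (x t) w, z w - x t w⟫ ≤
        (‖z w - xh t w‖^2 - ‖z w - xh (t+1) w‖^2)/2
        + ⟪η • gvec d A (x t) w - η • gvec d A (x (t-1)) w, xh (t+1) w - x t w⟫
        - ‖xh (t+1) w - x t w‖^2/2 - ‖x t w - xh t w‖^2/2 := by
      intro w
      have h1' : ∀ yy ∈ X w, ⟪η • gvec d A (x (t-1)) w, yy⟫ - (1/2)*‖yy - xh t w‖^2
          ≤ ⟪η • gvec d A (x (t-1)) w, x t w⟫ - (1/2)*‖x t w - xh t w‖^2 := by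
        intro yy hyy
        rw [inner_smul_gvec, inner_smul_gvec]
        exact (hup1 t ht w).2 yy hyy
      have h2' : ∀ yy ∈ X w, ⟪η • gvec d A (x t) w, yy⟫ - (1/2)*‖yy - xh t w‖^2
          ≤ ⟪η • gvec d A (x t) w, xh (t+1) w⟫ - (1/2)*‖xh (t+1) w - xh t w‖^2 := by
        intro yy hyy
        rw [inner_smul_gvec, inner_smul_gvec]
        exact (hup2 t ht w).2 yy hyy
      have hs := step2_lemma (hXconv w) (hzmem w) ((hup1 t ht w).1)
        ((hup2 t ht w).1) h1' h2'
      rw [← real_inner_smul_left]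
      exact hs
    have hsum := Finset.sum_le_sum (fun w (_ : w ∈ Finset.univ) => perw w)
    have ea : ∑ w, ‖z w - xh t w‖^2 = f t := normsq_sub_embProf d z (xh t)
    have eb : ∑ w, ‖z w - xh (t+1) w‖^2 = f (t+1) := normsq_sub_embProf d z (xh (t+1))
    have ec : ∑ w, ‖xh (t+1) w - x t w‖^2 = B t := normsq_sub_embProf d (xh (t+1)) (x t)
    have ed : ∑ w, ‖x t w - xh t w‖^2
        = ‖embProf d (x t) - embProf d (xh t)‖^2 := normsq_sub_embProf d (x t) (xh t)
    have ee : ∑ w, ⟪η • gvec d A (x t) w - η • gvec d A (x (t-1)) w, xh (t+1) w - x t w⟫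
        = η * ⟪-(Matrix.toEuclideanCLM (𝕜 := ℝ) (blockR d A)
            (embProf d (x t) - embProf d (x (t-1)))),
            embProf d (xh (t+1)) - embProf d (x t)⟫ := by
      have hsm : ∀ w : V, η • gvec d A (x t) w - η • gvec d A (x (t-1)) w
          = η • (gvec d A (x t) w - gvec d A (x (t-1)) w) := fun w => (smul_sub η _ _).symm
      simp only [hsm, real_inner_smul_left]
      rw [← Finset.mul_sum]
      congr 1
      rw [← inner_embProf d (fun w => gvec d A (x t) w - gvec d A (x (t-1)) w)
        (fun w => xh (t+1) w - x t w), embProf_sub, embProf_sub,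
        embProf_gvec, embProf_gvec, map_sub]
      congr 1
      abel
    have esum : ∑ w, ((‖z w - xh t w‖^2 - ‖z w - xh (t+1) w‖^2)/2
        + ⟪η • gvec d A (x t) w - η • gvec d A (x (t-1)) w, xh (t+1) w - x t w⟫
        - ‖xh (t+1) w - x t w‖^2/2 - ‖x t w - xh t w‖^2/2)
        = (f t - f (t+1))/2
          + η * ⟪-(Matrix.toEuclideanCLM (𝕜 := ℝ) (blockR d A)
              (embProf d (x t) - embProf d (x (t-1)))),
              embProf d (xh (t+1)) - embProf d (x t)⟫
          - B t/2 - ‖embProf d (x t) - embProf d (xh t)‖^2/2 := by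
      rw [Finset.sum_sub_distrib, Finset.sum_sub_distrib, Finset.sum_add_distrib, ee,
        ← Finset.sum_div, ← Finset.sum_div, ← Finset.sum_div, Finset.sum_sub_distrib,
        ea, eb, ec, ed]
    rw [esum] at hsum
    -- Cauchy--Schwarz / operator norm bound
    have hcs : ⟪-(Matrix.toEuclideanCLM (𝕜 := ℝ) (blockR d A)
            (embProf d (x t) - embProf d (x (t-1)))),
            embProf d (xh (t+1)) - embProf d (x t)⟫
        ≤ N * ‖embProf d (x t) - embProf d (x (t-1))‖
            * ‖embProf d (xh (t+1)) - embProf d (x t)‖ :=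
      clm_inner_le (blockR d A) _ _
    have hcs' : η * ⟪-(Matrix.toEuclideanCLM (𝕜 := ℝ) (blockR d A)
            (embProf d (x t) - embProf d (x (t-1)))),
            embProf d (xh (t+1)) - embProf d (x t)⟫
        ≤ η * (N * ‖embProf d (x t) - embProf d (x (t-1))‖
            * ‖embProf d (xh (t+1)) - embProf d (x t)‖) :=
      mul_le_mul_of_nonneg_left hcs hη.le
    -- triangle inequality
    have htri : ‖embProf d (x t) - embProf d (x (t-1))‖
        ≤ ‖embProf d (x t) - embProf d (xh t)‖ + ‖embProf d (xh t) - embProf d (x (t-1))‖ := by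
      have e : embProf d (x t) - embProf d (x (t-1))
          = (embProf d (x t) - embProf d (xh t))
            + (embProf d (xh t) - embProf d (x (t-1))) := by abel
      rw [e]
      exact norm_add_le _ _
    have hBtm : B (t-1) = ‖embProf d (xh t) - embProf d (x (t-1))‖^2 := by
      show ‖embProf d (xh ((t-1)+1)) - embProf d (x (t-1))‖^2 = _
      rw [htm]
    -- abbreviations for nlinarith
    set a : ℝ := ‖embProf d (x t) - embProf d (x (t-1))‖ with ha
    set b : ℝ := ‖embProf d (xh (t+1)) - embProf d (x t)‖ with hb
    set c : ℝ := ‖embProf d (x t) - embProf d (xh t)‖ with hc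
    set e : ℝ := ‖embProf d (xh t) - embProf d (x (t-1))‖ with he
    have ha0 : 0 ≤ a := norm_nonneg _
    have hb0 : 0 ≤ b := norm_nonneg _
    have hc0 : 0 ≤ c := norm_nonneg _
    have he0 : 0 ≤ e := norm_nonneg _
    have hBt : B t = b^2 := rfl
    have hasq : a^2 ≤ 2*c^2 + 2*e^2 := by
      have h1 : a^2 ≤ (c+e)^2 := by nlinarith [htri, ha0, hc0, he0]
      nlinarith [sq_nonneg (c-e)]
    have hprod : η * (N * a * b) ≤ (η*N)^2 * a^2 + b^2/4 := by
      nlinarith [sq_nonneg (η*N*a - b/2)]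
    have hprod2 : (η*N)^2 * a^2 ≤ a^2/8 := by nlinarith [sq_nonneg a, hr2]
    rw [hBtm]
    calc ∑ w, η * ⟪gvec d A (x t) w, z w - x t w⟫
        ≤ (f t - f (t+1))/2 + η * (N * a * b) - B t/2 - c^2/2 := by linarith [hsum, hcs']
      _ ≤ (f t - f (t+1))/2 + (e^2 - b^2)/4 := by
          rw [hBt]
          nlinarith [hprod, hprod2, hasq]
  -- telescoping
  have master : ∀ n : ℕ,
      ∑ t ∈ Finset.Icc 1 n, (∑ w, η * ⟪gvec d A (x t) w, z w - x t w⟫)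
        ≤ (f 1 - f (n+1))/2 + (B 0 - B n)/4 := by
    intro n
    induction n with
    | zero => simp
    | succ m ih =>
      rw [Finset.sum_Icc_succ_top (by omega)]
      have hk := key (m+1) (by omega)
      have he : (m+1) - 1 = m := by omega
      rw [he] at hk
      linarith
  -- diameter bounds
  have hf1 : f 1 ≤ D^2 := by
    have h := emb_dist_le d X hXcp z (xh 1) hzmem (hxhmem 1 le_rfl)
    show ‖embProf d z - embProf d (xh 1)‖^2 ≤ D^2
    nlinarith [norm_nonneg (embProf d z - embProf d (xh 1))]
  have hB0 : B 0 ≤ D^2 := by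
    have h := emb_dist_le d X hXcp (xh 1) (x 0) (hxhmem 1 le_rfl) (hxmem 0)
    show ‖embProf d (xh (0+1)) - embProf d (x 0)‖^2 ≤ D^2
    simp only [Nat.zero_add]
    nlinarith [norm_nonneg (embProf d (xh 1) - embProf d (x 0))]
  have hStot : ∑ t ∈ Finset.Icc 1 T, (∑ w, η * ⟪gvec d A (x t) w, z w - x t w⟫) ≤ D^2 := by
    have := master T
    have h1 : 0 ≤ f (T+1) := by positivity
    have h2 : 0 ≤ B T := by positivity
    nlinarith
  -- game value identity
  have havg : ∀ (w v : V) (q : EuclideanSpace ℝ (Fin (d w))),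
      ∑ t ∈ Finset.Icc 1 T, bilForm (A w v) q (x t v) = T * bilForm (A w v) q (xbar v) := by
    intro w v q
    have e : bilForm (A w v) q (xbar v)
        = (T:ℝ)⁻¹ * ∑ t ∈ Finset.Icc 1 T, bilForm (A w v) q (x t v) := by
      rw [show xbar v = (T:ℝ)⁻¹ • ∑ s ∈ Finset.Icc 1 T, x s v from rfl,
        bilForm_smul_right, bilForm_sum_right]
    rw [e]
    field_simp
  have hval : ∑ t ∈ Finset.Icc 1 T, (∑ w, η * ⟪gvec d A (x t) w, z w - x t w⟫)
      = η * T * ((∑ v ∈ Finset.univ.erase u, bilForm (A u v) y (xbar v))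
        - (∑ v ∈ Finset.univ.erase u, bilForm (A u v) (xbar u) (xbar v))) := by
    have expand : ∀ t ∈ Finset.Icc 1 T, ∑ w, η * ⟪gvec d A (x t) w, z w - x t w⟫
        = η * ((∑ v ∈ Finset.univ.erase u, bilForm (A u v) y (x t v))
               - (∑ v ∈ Finset.univ.erase u, bilForm (A u v) (xbar u) (x t v))
               + ∑ w, ∑ v ∈ Finset.univ.erase w, bilForm (A w v) (xbar w) (x t v)) := by
      intro t _
      have h0 : ∑ w, ⟪gvec d A (x t) w, x t w⟫ = 0 := by
        simp only [inner_gvec']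
        exact hzero (x t) (hxmem t)
      have hsplit : ∑ w, ⟪gvec d A (x t) w, z w⟫
          = ⟪gvec d A (x t) u, y⟫ - ⟪gvec d A (x t) u, xbar u⟫
            + ∑ w, ⟪gvec d A (x t) w, xbar w⟫ := by
        rw [← Finset.add_sum_erase _ (fun w => ⟪gvec d A (x t) w, z w⟫) (Finset.mem_univ u),
          ← Finset.add_sum_erase _ (fun w => ⟪gvec d A (x t) w, xbar w⟫) (Finset.mem_univ u)]
        have he : ∑ w ∈ Finset.univ.erase u, ⟪gvec d A (x t) w, z w⟫
            = ∑ w ∈ Finset.univ.erase u, ⟪gvec d A (x t) w, xbar w⟫ :=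
          Finset.sum_congr rfl (fun w hw => by rw [hzw w (Finset.mem_erase.mp hw).1])
        rw [he, hzu]
        ring
      have hexp : ∑ w, η * ⟪gvec d A (x t) w, z w - x t w⟫
          = η * (∑ w, ⟪gvec d A (x t) w, z w⟫ - ∑ w, ⟪gvec d A (x t) w, x t w⟫) := by
        rw [← Finset.mul_sum]
        congr 1
        rw [← Finset.sum_sub_distrib]
        exact Finset.sum_congr rfl fun w _ => inner_sub_right _ _ _
      rw [hexp, h0, hsplit, inner_gvec', inner_gvec']
      have hW : ∑ w, ⟪gvec d A (x t) w, xbar w⟫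
          = ∑ w, ∑ v ∈ Finset.univ.erase w, bilForm (A w v) (xbar w) (x t v) :=
        Finset.sum_congr rfl fun w _ => inner_gvec' d A (x t) w (xbar w)
      rw [hW]
      ring
    rw [Finset.sum_congr rfl expand, ← Finset.mul_sum]
    have hsplit3 : ∑ t ∈ Finset.Icc 1 T,
        ((∑ v ∈ Finset.univ.erase u, bilForm (A u v) y (x t v))
          - (∑ v ∈ Finset.univ.erase u, bilForm (A u v) (xbar u) (x t v))
          + ∑ w, ∑ v ∈ Finset.univ.erase w, bilForm (A w v) (xbar w) (x t v))
        = (∑ t ∈ Finset.Icc 1 T, ∑ v ∈ Finset.univ.erase u, bilForm (A u v) y (x t v))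
          - (∑ t ∈ Finset.Icc 1 T, ∑ v ∈ Finset.univ.erase u, bilForm (A u v) (xbar u) (x t v))
          + ∑ t ∈ Finset.Icc 1 T, ∑ w, ∑ v ∈ Finset.univ.erase w,
              bilForm (A w v) (xbar w) (x t v) := by
      rw [Finset.sum_add_distrib, Finset.sum_sub_distrib]
    have hY : ∑ t ∈ Finset.Icc 1 T, ∑ v ∈ Finset.univ.erase u, bilForm (A u v) y (x t v)
        = T * ∑ v ∈ Finset.univ.erase u, bilForm (A u v) y (xbar v) := by
      rw [Finset.sum_comm, Finset.mul_sum]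
      exact Finset.sum_congr rfl fun v _ => havg u v y
    have hX : ∑ t ∈ Finset.Icc 1 T, ∑ v ∈ Finset.univ.erase u, bilForm (A u v) (xbar u) (x t v)
        = T * ∑ v ∈ Finset.univ.erase u, bilForm (A u v) (xbar u) (xbar v) := by
      rw [Finset.sum_comm, Finset.mul_sum]
      exact Finset.sum_congr rfl fun v _ => havg u v (xbar u)
    have hZ : ∑ t ∈ Finset.Icc 1 T, ∑ w, ∑ v ∈ Finset.univ.erase w,
        bilForm (A w v) (xbar w) (x t v) = 0 := by
      rw [Finset.sum_comm]
      have e1 : ∀ w ∈ Finset.univ, ∑ t ∈ Finset.Icc 1 T, ∑ v ∈ Finset.univ.erase w,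
          bilForm (A w v) (xbar w) (x t v)
          = (T:ℝ) * ∑ v ∈ Finset.univ.erase w, bilForm (A w v) (xbar w) (xbar v) := by
        intro w _
        rw [Finset.sum_comm, Finset.mul_sum]
        exact Finset.sum_congr rfl fun v _ => havg w v (xbar w)
      rw [Finset.sum_congr rfl e1, ← Finset.mul_sum, hzero xbar hxbarmem, mul_zero]
    rw [hsplit3, hY, hX, hZ]
    ring
  -- conclude
  show (∑ v ∈ Finset.univ.erase u, bilForm (A u v) (xbar u) (xbar v))
      ≥ (∑ v ∈ Finset.univ.erase u, bilForm (A u v) y (xbar v)) - D^2 / (η * T)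
  rw [ge_iff_le, sub_le_iff_le_add]
  rw [hval] at hStot
  have hpos : 0 < η * (T:ℝ) := by positivity
  have h2 : (∑ v ∈ Finset.univ.erase u, bilForm (A u v) y (xbar v))
      - (∑ v ∈ Finset.univ.erase u, bilForm (A u v) (xbar u) (xbar v)) ≤ D^2 / (η * T) := by
    rw [le_div_iff₀ hpos, mul_comm]
    exact hStot
  linarith [h2]

end
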